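/- arXiv:math/0509103 — 5 statements merged into one kernel-verified Lean document; each statement's English description precedes it below -/
import Mathlib

section
/- Let D be a C*-algebra, let p and q be projections in D, and suppose there exists x ∈ D with ‖x p x* − q‖ < 1/2. Then q is Murray–von Neumann equivalent to a subprojection of p; that is, there exists v ∈ D with v* v = q and v v* ≤ p. -/
/-!
Pass to the unitization and put `b = q x p x⋆ q`. The element `u = 1 - q + b` satisfies
`‖u - 1‖ = ‖q (x p x⋆ - q) q‖ < 1`, so it is strictly positive, and it commutes with `q`; hence
`c = q u^(-1/2)` gives `c⋆ (x p x⋆) c = u^(-1/2) q u q u^(-1/2) = q`. Since `D` is an ideal in its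
unitization, `v = p x⋆ c` lies in `D`; it is a partial isometry with `v⋆ v = q` and `p v = v`,
so `v v⋆` is a projection below `p`.
-/

/-- Cuntz subequivalence of elements of a C*-algebra: `a ≾ b` iff there is a sequence
`(x k)` with `x k * b * (x k)⋆ → a` (equivalently, with stars arranged as below). -/
def CuntzLE {A : Type*} [NonUnitalRing A] [StarRing A] [Norm A] (a b : A) : Prop :=
  ∃ x : ℕ → A,
    Filter.Tendsto (fun k => ‖star (x k) * b * x k - a‖) Filter.atTop (nhds 0)

open CFC

theorem Unitization.inr_mul_eq_inr {R A : Type*} [Semiring R] [NonUnitalNonAssocSemiring A]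
    [Module R A] (a : A) (y : Unitization R A) :
    (a : Unitization R A) * y = ↑(y.fst • a + a * y.snd) := by
  ext <;> simp

theorem IsStarProjection.mul_star_self_of_star_mul_self {E : Type*} [NonUnitalNormedRing E]
    [StarRing E] [CStarRing E] {v : E} (h : IsStarProjection (star v * v)) :
    IsStarProjection (v * star v) := by
  have hv : v * (star v * v) = v := by
    have h0 : star (v * (star v * v) - v) * (v * (star v * v) - v) = 0 := by
      have e : star (v * (star v * v) - v) * (v * (star v * v) - v)
          = (star v * v) * (star v * v) * (star v * v) - (star v * v) * (star v * v)
            - (star v * v) * (star v * v) + star v * v := by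
        simp only [star_sub, star_mul, star_star]; noncomm_ring
      rw [e, h.isIdempotentElem.eq, h.isIdempotentElem.eq]
      abel
    exact sub_eq_zero.mp (CStarRing.star_mul_self_eq_zero_iff _ |>.mp h0)
  refine ⟨?_, .mul_star_self v⟩
  calc v * star v * (v * star v) = v * (star v * v) * star v := by noncomm_ring
    _ = v * star v := by rw [hv]

section Unital

variable {A : Type*} [CStarAlgebra A]

lemma isStrictlyPositive_one_add_of_norm_lt_one [PartialOrder A] [StarOrderedRing A] {a : A}
    (ha : IsSelfAdjoint a) (h : ‖a‖ < 1) : IsStrictlyPositive (1 + a) := by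
  refine (isStrictlyPositive_algebraMap (𝕜 := ℝ) (sub_pos.mpr h)).of_le ?_
  rw [map_sub, map_one, sub_eq_add_neg]
  exact add_le_add le_rfl ha.neg_algebraMap_norm_le_self

theorem IsStarProjection.exists_star_mul_mul_eq_of_norm_sub_lt_one {Q a : A}
    (hQ : IsStarProjection Q) (ha : IsSelfAdjoint a) (h : ‖a - Q‖ < 1) :
    ∃ c, star c * a * c = Q := by
  let := CStarAlgebra.spectralOrder A
  have := CStarAlgebra.spectralOrderedRing A
  set b := Q * a * Q
  set u := 1 + (b - Q)
  have hQb : Q * b = b := by simp only [b, ← mul_assoc, hQ.isIdempotentElem.eq]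
  have hbQ : b * Q = b := by simp only [b, mul_assoc, hQ.isIdempotentElem.eq]
  have hQu : Q * u = b := by
    simp only [u, mul_add, mul_sub, mul_one, hQb, hQ.isIdempotentElem.eq]; abel
  have hu_comm : Commute u Q := by
    show u * Q = Q * u
    rw [hQu]; simp only [u, add_mul, sub_mul, one_mul, hbQ, hQ.isIdempotentElem.eq]; abel
  have hb_norm : ‖b - Q‖ < 1 := by
    have e : b - Q = Q * (a - Q) * Q := by
      simp only [b, mul_sub, sub_mul, hQ.isIdempotentElem.eq]
    calc ‖b - Q‖ ≤ ‖Q‖ * ‖a - Q‖ * ‖Q‖ := e ▸ norm_mul₃_le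
      _ ≤ 1 * ‖a - Q‖ * 1 := by gcongr <;> exact hQ.norm_le
      _ < 1 := by simpa using h
  have hu : IsStrictlyPositive u := isStrictlyPositive_one_add_of_norm_lt_one
    ((ha.conjugate_self hQ.isSelfAdjoint).sub hQ.isSelfAdjoint) hb_norm
  set c := u ^ (-(1 / 2) : ℝ)
  have hc_comm : Commute c Q := hu_comm.cfc_nnreal _
  refine ⟨Q * c, ?_⟩
  calc star (Q * c) * a * (Q * c) = c * Q * a * (Q * c) := by
        rw [star_mul, hQ.isSelfAdjoint.star_eq, rpow_nonneg.isSelfAdjoint.star_eq]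
    _ = c * (Q * u) * c := by simp only [hQu, b, mul_assoc]
    _ = Q * (c * u * c) := by rw [← mul_assoc c Q, hc_comm.eq]; simp only [mul_assoc]
    _ = Q := by rw [conjugate_rpow_neg_one_half u, mul_one]

end Unital

/-- if `p, q` are projections in a C*-algebra `D` and `‖x * p * x⋆ - q‖ < 1/2`
for some `x`, then `q` is Murray–von Neumann equivalent to a subprojection of `p`. -/
theorem stmt0 {D : Type*} [NonUnitalCStarAlgebra D] [PartialOrder D] [StarOrderedRing D]
    (p q : D) (hp_sa : IsSelfAdjoint p) (hp_idem : IsIdempotentElem p)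
    (hq_sa : IsSelfAdjoint q) (hq_idem : IsIdempotentElem q)
    (x : D) (hx : ‖x * p * star x - q‖ < 1 / 2) :
    ∃ v : D, star v * v = q ∧ v * star v ≤ p := by
  have hq : IsStarProjection q := ⟨hq_idem, hq_sa⟩
  have hxpx : star (p * star x) * (p * star x) = x * p * star x := by
    rw [star_mul, star_star, hp_sa.star_eq, mul_assoc x p, ← mul_assoc p p, hp_idem.eq,
      ← mul_assoc]
  obtain ⟨c, hc⟩ := (hq.inr (R := ℂ)).exists_star_mul_mul_eq_of_norm_sub_lt_one
      ((hp_sa.conjugate x).inr ℂ) <| by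
    rw [← Unitization.inr_sub, Unitization.norm_inr]; linarith
  set v : D := c.fst • (p * star x) + p * star x * c.snd
  have hv : (v : Unitization ℂ D) = ↑(p * star x) * c := (Unitization.inr_mul_eq_inr _ _).symm
  have hvv : star v * v = q := by
    apply Unitization.inr_injective (R := ℂ)
    rw [Unitization.inr_mul, Unitization.inr_star, hv, ← hc, ← hxpx]
    simp only [star_mul, Unitization.inr_mul, Unitization.inr_star, mul_assoc]
  have hpv : p * v = v := by
    apply Unitization.inr_injective (R := ℂ)
    rw [Unitization.inr_mul, hv, ← mul_assoc, ← Unitization.inr_mul, ← mul_assoc, hp_idem.eq]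
  refine ⟨v, hvv, IsStarProjection.le_of_mul_eq_right ?_ ⟨hp_idem, hp_sa⟩ ?_⟩
  · exact .mul_star_self_of_star_mul_self (hvv ▸ hq)
  · rw [← mul_assoc, hpv]
end

section
/- Let p and q be projections in a C*-algebra A with p ≾ q (p Cuntz subequivalent to q). Then p is Murray–von Neumann equivalent to a subprojection of q; that is, there exists v ∈ A with v* v = p and v v* ≤ q. -/
/-!
Choose `x` with `‖x⋆ q x - p‖ < 1` and put `y = q x p`. Then `a = y⋆ y = p (x⋆ q x) p` lies within
distance `< 1` of the unit `p` of the corner `pAp`, so it is invertible there and has an inverse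
square root `b` in `pAp`, found by continuous functional calculus applied to `1 - p + a` in the
unitization. The element `v = y b` satisfies `v⋆ v = b a b = p`, so `v v⋆` is a projection; since
`q v = v`, it lies under `q`.
-/

lemma spectrum_subset_Ioi_zero_of_norm_sub_one_lt {B : Type*} [NormedRing B] [NormedAlgebra ℝ B]
    [CompleteSpace B] [NormOneClass B] {a : B} (h : ‖a - 1‖ < 1) :
    spectrum ℝ a ⊆ Set.Ioi 0 := by
  intro t ht
  have hmem : t - 1 ∈ spectrum ℝ (a - algebraMap ℝ B 1) := by
    rw [← spectrum.sub_singleton_eq]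
    exact Set.sub_mem_sub ht rfl
  have hle := spectrum.norm_le_norm_of_mem hmem
  rw [map_one, Real.norm_eq_abs] at hle
  exact Set.mem_Ioi.2 (by linarith [(abs_lt.mp (hle.trans_lt h)).1])

lemma cfc_inv_sqrt_mul_self_mul_cfc_inv_sqrt {B : Type*} [CStarAlgebra B] {a : B}
    (ha : IsSelfAdjoint a) (h : spectrum ℝ a ⊆ Set.Ioi 0) :
    cfc (fun t : ℝ => (√t)⁻¹) a * a * cfc (fun t : ℝ => (√t)⁻¹) a = 1 := by
  have hcont : ContinuousOn (fun t : ℝ => (√t)⁻¹) (spectrum ℝ a) :=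
    Real.continuous_sqrt.continuousOn.inv₀ fun t ht => (Real.sqrt_pos.2 (h ht)).ne'
  nth_rw 2 [← cfc_id' ℝ a]
  rw [← cfc_mul _ _ a hcont,
    ← cfc_mul (fun t : ℝ => (√t)⁻¹ * t) _ a (hcont.mul continuousOn_id) hcont, ← cfc_one ℝ a]
  refine cfc_congr fun t ht => ?_
  rw [Pi.one_apply, mul_right_comm, ← mul_inv, Real.mul_self_sqrt (h ht).le,
    inv_mul_cancel₀ (h ht).ne']

section CStarRing

variable {E : Type*} [NonUnitalNormedRing E] [StarRing E] [CStarRing E]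

lemma norm_mul_mul_le_of_isStarProjection {p : E} (hp : IsStarProjection p) (x : E) :
    ‖p * x * p‖ ≤ ‖x‖ :=
  calc ‖p * x * p‖ ≤ ‖p‖ * ‖x‖ * ‖p‖ := norm_mul₃_le
    _ ≤ 1 * ‖x‖ * 1 := by gcongr <;> exact hp.norm_le
    _ = ‖x‖ := by ring

lemma mul_star_mul_self_of_isStarProjection {v : E} (hv : IsStarProjection (star v * v)) :
    v * (star v * v) = v := by
  set e := star v * v with he
  have hee : e * e = e := hv.isIdempotentElem.eq
  have hzero : star (v - v * e) * (v - v * e) = 0 := by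
    have h1 : star v * (v * e) = e := by rw [← mul_assoc, ← he, hee]
    have h2 : e * star v * v = e := by rw [mul_assoc, ← he, hee]
    have h3 : e * star v * (v * e) = e := by rw [← mul_assoc, h2, hee]
    rw [star_sub, star_mul, hv.isSelfAdjoint.star_eq, sub_mul, mul_sub, mul_sub, ← he, h1, h2, h3]
    abel
  exact (sub_eq_zero.mp ((CStarRing.star_mul_self_eq_zero_iff _).mp hzero)).symm

lemma IsStarProjection.mul_star_self_of_star_mul_self_s4 {v : E}
    (hv : IsStarProjection (star v * v)) : IsStarProjection (v * star v) where
  isIdempotentElem := by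
    rw [IsIdempotentElem, ← mul_assoc, mul_assoc v, mul_star_mul_self_of_isStarProjection hv]
  isSelfAdjoint := .mul_star_self v

end CStarRing

open Unitization in
lemma exists_star_mul_mul_eq_of_norm_sub_lt_one {A : Type*} [NonUnitalCStarAlgebra A]
    {p c : A} (hp : IsStarProjection p) (hc : IsSelfAdjoint c) (h : ‖c - p‖ < 1) :
    ∃ b : A, star b * (p * c * p) * b = p := by
  set a := p * c * p with ha_def
  have hP : IsStarProjection (p : Unitization ℂ A) := hp.inr
  have hPP := hP.isIdempotentElem.eq
  have hPa : (p * a : Unitization ℂ A) = a := by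
    rw [← inr_mul, ha_def, ← mul_assoc, ← mul_assoc, hp.isIdempotentElem.eq]
  have haP : (a * p : Unitization ℂ A) = a := by
    rw [← inr_mul, ha_def, mul_assoc, hp.isIdempotentElem.eq]
  have ha : IsSelfAdjoint a := hc.conjugate_self hp.isSelfAdjoint
  set a' : Unitization ℂ A := 1 - p + a with ha'_def
  have ha' : IsSelfAdjoint a' := hP.one_sub.isSelfAdjoint.add (ha.inr ℂ)
  have ha'_near_one : ‖a' - 1‖ < 1 := by
    have hcompress : a - p = p * (c - p) * p := by
      rw [ha_def, mul_sub, sub_mul, hp.isIdempotentElem.eq, hp.isIdempotentElem.eq]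
    rw [ha'_def, add_sub_right_comm, sub_sub_cancel_left, neg_add_eq_sub, ← inr_sub, norm_inr,
      hcompress]
    exact (norm_mul_mul_le_of_isStarProjection hp _).trans_lt h
  have ha'P : a' * p = a := by rw [ha'_def, add_mul, sub_mul, one_mul, hPP, haP]; abel
  have hPa' : p * a' = a := by rw [ha'_def, mul_add, mul_sub, mul_one, hPP, hPa]; abel
  set s := cfc (fun t : ℝ => (√t)⁻¹) a'
  have hs : s * a' * s = 1 := cfc_inv_sqrt_mul_self_mul_cfc_inv_sqrt ha'
    (spectrum_subset_Ioi_zero_of_norm_sub_one_lt ha'_near_one)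
  have hsP : Commute s p := (show Commute a' p from ha'P.trans hPa'.symm).cfc_real _
  have hs_sa : IsSelfAdjoint s := cfc_predicate _ _
  have hinr : (((s * p).snd : A) : Unitization ℂ A) = s * p := Unitization.ext (by simp) rfl
  refine ⟨(s * p).snd, inr_injective (R := ℂ) ?_⟩
  calc _ = star (s * p) * a * (s * p) := by rw [inr_mul, inr_mul, inr_star, hinr]
    _ = s * (p * a) * (s * p) := by
        rw [star_mul, hs_sa.star_eq, hP.isSelfAdjoint.star_eq, ← hsP.eq, mul_assoc s]
    _ = s * a' * (p * s) * p := by rw [hPa, ← ha'P]; simp only [mul_assoc]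
    _ = s * a' * s * (p * p) := by rw [← hsP.eq]; simp only [mul_assoc]
    _ = p := by rw [hs, one_mul, hPP]

/-- if `p ≾ q` for projections `p, q` in a C*-algebra, then `p` is
Murray–von Neumann equivalent to a subprojection of `q`. -/
theorem stmt4 {A : Type*} [NonUnitalCStarAlgebra A] [PartialOrder A] [StarOrderedRing A]
    (p q : A) (hp_sa : IsSelfAdjoint p) (hp_idem : IsIdempotentElem p)
    (hq_sa : IsSelfAdjoint q) (hq_idem : IsIdempotentElem q)
    (h : CuntzLE p q) :
    ∃ v : A, star v * v = p ∧ v * star v ≤ q := by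
  have hp : IsStarProjection p := ⟨hp_idem, hp_sa⟩
  have hq : IsStarProjection q := ⟨hq_idem, hq_sa⟩
  obtain ⟨x, hx⟩ := h
  obtain ⟨k, hk⟩ : ∃ k, ‖star (x k) * q * x k - p‖ < 1 :=
    (hx.eventually (gt_mem_nhds one_pos)).exists
  obtain ⟨b, hb⟩ := exists_star_mul_mul_eq_of_norm_sub_lt_one hp (hq_sa.conjugate' (x k)) hk
  set v := q * x k * p * b
  have hvv : star v * v = p := by
    rw [← hb]
    simp only [v, star_mul, hp_sa.star_eq, hq_sa.star_eq, mul_assoc, ← mul_assoc q q, hq_idem.eq]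
  have hqv : q * v = v := by simp only [v, ← mul_assoc, hq_idem.eq]
  refine ⟨v, hvv, ?_⟩
  have hw := IsStarProjection.mul_star_self_of_star_mul_self_s4 (hvv ▸ hp)
  exact hw.le_of_mul_eq_right hq (by rw [← mul_assoc, hqv])
end

section
/- Let A be a C*-algebra, let p ∈ A be a projection, let a ∈ A be positive, and suppose p ≤ t a for some real number t > 0. Then there exists b ∈ A with b a b* = p; in particular p ≾ a. -/
/-!
Pass to the unitization and put `s = max t 1`, so that `p ≤ s • (p a p)`. The element
`u = 1 - p + p a p` dominates `s⁻¹ • 1`, hence is invertible, and it commutes with `p` with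
`u p = p a p`. Then `b = u^(-1/2) p` works:
`b a b⋆ = u^(-1/2) (p a p) u^(-1/2) = u^(-1/2) u u^(-1/2) p = p`, and `b` lies in `A` because `p`
does.
-/

lemma cuntzLE_of_mul_mul_star_eq {A : Type*} [NonUnitalNormedRing A] [StarRing A] {a b p : A}
    (h : b * a * star b = p) : CuntzLE p a :=
  ⟨fun _ => star b, by simp [h]⟩

lemma Unitization.mul_inr {R A : Type*} [CommSemiring R] [NonUnitalNonAssocSemiring A]
    [Module R A] (x : Unitization R A) (a : A) :
    x * (a : Unitization R A) = ↑(x.fst • a + x.snd * a) := by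
  ext <;> simp

section StarOrderedRing

variable {R : Type*} [Ring R] [StarRing R] [PartialOrder R] [StarOrderedRing R] [Module ℝ R]
  {p : R}

lemma IsStarProjection.le_smul_conjugate [SMulCommClass ℝ R R] [IsScalarTower ℝ R R]
    (hp : IsStarProjection p) {a : R} {t : ℝ} (h : p ≤ t • a) : p ≤ t • (p * a * p) := by
  simpa [hp.isSelfAdjoint.star_eq, hp.isIdempotentElem.eq, mul_smul_comm, smul_mul_assoc]
    using star_left_conjugate_le_conjugate h p

lemma IsStarProjection.inv_smul_one_le_one_sub_add [PosSMulMono ℝ R] (hp : IsStarProjection p)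
    {c : R} {s : ℝ} (hs : 1 ≤ s) (h : p ≤ s • c) : s⁻¹ • (1 : R) ≤ 1 - p + c := by
  have hs₀ : 0 < s := one_pos.trans_le hs
  have hpc : s⁻¹ • p ≤ c := by
    simpa [smul_smul, hs₀.ne'] using smul_le_smul_of_nonneg_left h (inv_nonneg.mpr hs₀.le)
  have hq : s⁻¹ • (1 - p) ≤ 1 - p :=
    smul_le_of_le_one_left hp.one_sub.nonneg (inv_le_one_of_one_le₀ hs)
  calc s⁻¹ • (1 : R) = s⁻¹ • p + s⁻¹ • (1 - p) := by rw [← smul_add, add_sub_cancel]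
    _ ≤ c + (1 - p) := add_le_add hpc hq
    _ = 1 - p + c := add_comm _ _

end StarOrderedRing

section Unital

variable {B : Type*} [CStarAlgebra B] [PartialOrder B] [StarOrderedRing B]

lemma CFC.conjugate_rpow_neg_one_half_mul_of_commute {u q : B} (hu : IsStrictlyPositive u)
    (hq : Commute q u) : u ^ (-(1 / 2) : ℝ) * (u * q) * u ^ (-(1 / 2) : ℝ) = q := by
  set v := u ^ (-(1 / 2) : ℝ)
  have hqv : Commute q v := by
    rw [show v = cfc (fun x : NNReal => x ^ (-(1 / 2) : ℝ)) u from CFC.rpow_def]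
    exact (hq.symm.cfc_nnreal _).symm
  calc v * (u * q) * v = v * u * (q * v) := by simp only [mul_assoc]
    _ = v * u * v * q := by rw [hqv.eq, ← mul_assoc]
    _ = q := by rw [CFC.conjugate_rpow_neg_one_half u hu, one_mul]

lemma IsStarProjection.exists_mul_mul_mul_star_eq_of_le_smul {p a : B} (hp : IsStarProjection p)
    (ha : 0 ≤ a) {t : ℝ} (hle : p ≤ t • a) : ∃ v : B, v * p * a * star (v * p) = p := by
  set s := max t 1
  have hs : 1 ≤ s := le_max_right t 1
  have hps : p ≤ s • (p * a * p) :=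
    hp.le_smul_conjugate (hle.trans (smul_le_smul_of_nonneg_right (le_max_left t 1) ha))
  set u := 1 - p + p * a * p
  have hu : IsStrictlyPositive u :=
    (isStrictlyPositive_one.smul (inv_pos.mpr (one_pos.trans_le hs))).of_le
      (hp.inv_smul_one_le_one_sub_add hs hps)
  have hpp := hp.isIdempotentElem.eq
  have hup : u * p = p * a * p := by simp only [u, sub_mul, add_mul, one_mul, mul_assoc, hpp]; abel
  have hpu : p * u = p * a * p := by
    simp only [u, mul_sub, mul_add, mul_one, ← mul_assoc, hpp]; abel
  refine ⟨u ^ (-(1 / 2) : ℝ), ?_⟩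
  rw [star_mul, hp.isSelfAdjoint.star_eq, (IsStrictlyPositive.rpow u _ hu).isSelfAdjoint.star_eq]
  calc _ = u ^ (-(1 / 2) : ℝ) * (u * p) * u ^ (-(1 / 2) : ℝ) := by
        simp only [hup, mul_assoc]
    _ = p := CFC.conjugate_rpow_neg_one_half_mul_of_commute hu (hpu.trans hup.symm)

end Unital

open Unitization in
lemma IsStarProjection.exists_mul_mul_star_eq_of_le_smul {A : Type*} [NonUnitalCStarAlgebra A]
    [PartialOrder A] [StarOrderedRing A] {p a : A} (hp : IsStarProjection p) (ha : 0 ≤ a)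
    {t : ℝ} (hle : p ≤ t • a) : ∃ b : A, b * a * star b = p := by
  have hle' : (p : Unitization ℂ A) ≤ t • (a : Unitization ℂ A) := by
    rw [← inr_smul, inr_le_iff _ _ hp.isSelfAdjoint ((IsSelfAdjoint.all t).smul ha.isSelfAdjoint)]
    exact hle
  obtain ⟨v, hv⟩ := hp.inr.exists_mul_mul_mul_star_eq_of_le_smul (inr_nonneg_iff.mpr ha) hle'
  refine ⟨v.fst • p + v.snd * p, inr_injective (R := ℂ) ?_⟩
  rw [inr_mul, inr_mul, inr_star, ← mul_inr, hv]

theorem stmt11_general {A : Type*} [NonUnitalCStarAlgebra A] [PartialOrder A] [StarOrderedRing A]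
    (p a : A) (hp_sa : IsSelfAdjoint p) (hp_idem : IsIdempotentElem p)
    (ha : 0 ≤ a) (t : ℝ) (hle : p ≤ t • a) :
    (∃ b : A, b * a * star b = p) ∧ CuntzLE p a := by
  obtain ⟨b, hb⟩ := IsStarProjection.exists_mul_mul_star_eq_of_le_smul ⟨hp_idem, hp_sa⟩ ha hle
  exact ⟨⟨b, hb⟩, cuntzLE_of_mul_mul_star_eq hb⟩

/-- if a projection `p` satisfies `p ≤ t • a` for some `t > 0` and some
positive `a`, then `p = b a b⋆` for some `b`; in particular `p ≾ a`. -/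
theorem stmt11 {A : Type*} [NonUnitalCStarAlgebra A] [PartialOrder A] [StarOrderedRing A]
    (p a : A) (hp_sa : IsSelfAdjoint p) (hp_idem : IsIdempotentElem p)
    (ha : 0 ≤ a) (t : ℝ) (ht : 0 < t) (hle : p ≤ t • a) :
    (∃ b : A, b * a * star b = p) ∧ CuntzLE p a :=
  stmt11_general p a hp_sa hp_idem ha t hle
end

section
/- Let X be a compact Hausdorff space, U ⊆ X an open subset, and Y ⊆ U a closed subset of X. Let ρ : U → Y be a continuous map with ρ(y) = y for all y ∈ Y, and let f : X → [0,1] be continuous with f(y) = 1 for all y ∈ Y and f(x) = 0 for all x ∉ U. Fix m ∈ ℕ and positive elements p, q ∈ C(Y, M_m(ℂ)). Let P, Q ∈ C(X, M_m(ℂ)) be the continuous maps defined by P(x) = f(x)·p(ρ(x)) for x ∈ U and P(x) = 0 for x ∉ U, and Q(x) = f(x)·q(ρ(x)) for x ∈ U and Q(x) = 0 for x ∉ U. Then P and Q are positive, and P ≾ Q in C(X, M_m(ℂ)) if and only if p ≾ q in C(Y, M_m(ℂ)). -/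
/-!
Restriction to `Y` is a contractive `⋆`-homomorphism `C(X, Mₘ) → C(Y, Mₘ)` taking `P, Q` to
`p, q`, so `P ≾ Q` gives `p ≾ q`. Conversely, if `xₖ⋆ q xₖ → p`, let `Fₖ = gₖ · (xₖ ∘ ρ)` on `U`
and `0` off `U`, with `gₖ = min 1 ((k + 1) f)`. On `U`,
`Fₖ⋆ Q Fₖ - P = gₖ² f · (xₖ⋆ q xₖ - p) ∘ ρ + (gₖ² - 1) f · p ∘ ρ`,
where `gₖ² f ≤ 1` and `|(gₖ² - 1) f| ≤ 1 / (k + 1)`, so `Fₖ⋆ Q Fₖ → P`.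
-/

open scoped Matrix.Norms.L2Operator ComplexOrder

theorem CuntzLE.map {A B F : Type*} [NonUnitalNormedRing A] [StarRing A]
    [NonUnitalNormedRing B] [StarRing B] [FunLike F A B] [NonUnitalRingHomClass F A B]
    [StarHomClass F A B] (φ : F) (hφ : ∀ a, ‖φ a‖ ≤ ‖a‖) {a b : A} (hab : CuntzLE a b) :
    CuntzLE (φ a) (φ b) := by
  obtain ⟨x, hx⟩ := hab
  refine ⟨fun k => φ (x k), squeeze_zero (fun _ => norm_nonneg _) (fun k => ?_) hx⟩
  simpa only [map_sub, map_mul, map_star] using hφ (star (x k) * b * x k - a)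

theorem ContinuousMap.norm_restrict_le {X E : Type*} [TopologicalSpace X] [CompactSpace X]
    [SeminormedAddCommGroup E] (s : Set X) [CompactSpace s] (a : C(X, E)) :
    ‖a.restrict s‖ ≤ ‖a‖ :=
  ((a.restrict s).norm_le (norm_nonneg a)).2 fun x => a.norm_coe_le_norm x

theorem CuntzLE.restrict {X A : Type*} [TopologicalSpace X] [CompactSpace X] [NormedRing A]
    [StarRing A] [ContinuousStar A] (s : Set X) [CompactSpace s] {a b : C(X, A)}
    (hab : CuntzLE a b) : CuntzLE (a.restrict s) (b.restrict s) :=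
  hab.map (ContinuousMap.compStarAlgHom' ℕ A ((ContinuousMap.id X).restrict s))
    (·.norm_restrict_le s)

theorem continuous_of_eq_smul_of_eq_zero {X M : Type*} [TopologicalSpace X]
    [SeminormedAddCommGroup M] [NormedSpace ℝ M] {U : Set X} (hU : IsOpen U)
    {h : X → ℝ} (hh : Continuous h) (hh0 : ∀ x ∉ U, h x = 0)
    {v : U → M} (hv : Continuous v) {C : ℝ} (hC : ∀ u, ‖v u‖ ≤ C) {F : X → M}
    (hFU : ∀ (x : X) (hx : x ∈ U), F x = h x • v ⟨x, hx⟩) (hF0 : ∀ x ∉ U, F x = 0) :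
    Continuous F := by
  refine continuous_iff_continuousAt.2 fun x => ?_
  by_cases hx : x ∈ U
  · refine ContinuousOn.continuousAt ?_ (hU.mem_nhds hx)
    rw [continuousOn_iff_continuous_domRestrict]
    convert (hh.comp continuous_subtype_val).smul hv using 1
    funext u
    exact hFU u u.2
  · have hbound : ∀ z, ‖F z‖ ≤ |h z| * C := by
      intro z
      by_cases hz : z ∈ U
      · simpa [hFU z hz, norm_smul] using mul_le_mul_of_nonneg_left (hC _) (abs_nonneg (h z))
      · simp [hF0 z hz, hh0 z hz]
    rw [ContinuousAt, hF0 x hx]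
    exact squeeze_zero_norm hbound
      ((hh.abs.mul continuous_const).tendsto' x 0 (by simp [hh0 x hx]))

theorem abs_min_one_mul_sq_sub_one_mul_le {c t : ℝ} (hc : 0 < c) (ht : 0 ≤ t) :
    |(min 1 (c * t) ^ 2 - 1) * t| ≤ 1 / c := by
  rcases le_total 1 (c * t) with h | h
  · simp [min_eq_left h, hc.le]
  · have htc : t ≤ 1 / c := (le_div_iff₀' hc).2 h
    have hct : 0 ≤ c * t := mul_nonneg hc.le ht
    rw [min_eq_right h, abs_mul, abs_of_nonpos (by nlinarith), abs_of_nonneg ht]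
    nlinarith

theorem star_smul_mul_smul_mul_smul_sub_smul {A : Type*} [Ring A] [StarRing A] [Algebra ℝ A]
    [StarModule ℝ A] (g t : ℝ) (x a b : A) :
    star (g • x) * (t • b) * (g • x) - t • a =
      (g ^ 2 * t) • (star x * b * x - a) + ((g ^ 2 - 1) * t) • a := by
  simp only [star_smul, star_trivial, smul_mul_assoc, mul_smul_comm, smul_smul]
  module

section CutoffPullback

variable {X Y A : Type*} [TopologicalSpace X] [TopologicalSpace Y] [CompactSpace Y]
  {U : Set X} (hU : IsOpen U)

open Classical in
noncomputable def cutoffPullback [SeminormedAddCommGroup A] [NormedSpace ℝ A]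
    (h : C(X, ℝ)) (hh : ∀ x ∉ U, h x = 0) (ρ : C(U, Y)) (a : C(Y, A)) : C(X, A) where
  toFun x := if hx : x ∈ U then h x • a (ρ ⟨x, hx⟩) else 0
  continuous_toFun := continuous_of_eq_smul_of_eq_zero hU h.continuous hh
    (a.comp ρ).continuous (fun u => a.norm_coe_le_norm (ρ u))
    (fun _ hx => dif_pos hx) (fun _ hx => dif_neg hx)

variable [SeminormedAddCommGroup A] [NormedSpace ℝ A] {h : C(X, ℝ)}
  (hh : ∀ x ∉ U, h x = 0) (ρ : C(U, Y)) (a : C(Y, A))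

theorem cutoffPullback_apply_of_mem {x : X} (hx : x ∈ U) :
    cutoffPullback hU h hh ρ a x = h x • a (ρ ⟨x, hx⟩) :=
  dif_pos hx

theorem cutoffPullback_apply_of_notMem {x : X} (hx : x ∉ U) :
    cutoffPullback hU h hh ρ a x = 0 :=
  dif_neg hx

theorem eq_cutoffPullback {F : C(X, A)} (hFU : ∀ (x : X) (hx : x ∈ U), F x = h x • a (ρ ⟨x, hx⟩))
    (hF0 : ∀ x ∉ U, F x = 0) : F = cutoffPullback hU h hh ρ a := by
  ext1 x
  by_cases hx : x ∈ U
  · rw [hFU x hx, cutoffPullback_apply_of_mem]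
  · rw [hF0 x hx, cutoffPullback_apply_of_notMem _ _ _ _ hx]

end CutoffPullback

theorem cutoffPullback_restrict {X A : Type*} [TopologicalSpace X] [SeminormedAddCommGroup A]
    [NormedSpace ℝ A] {U Y : Set X} [CompactSpace Y] (hU : IsOpen U) {h : C(X, ℝ)} (hh : ∀ x ∉ U, h x = 0)
    (hh1 : ∀ y ∈ Y, h y = 1) (hYU : Y ⊆ U) {ρ : C(U, Y)}
    (hρ : ∀ (y : X) (hy : y ∈ Y), (ρ ⟨y, hYU hy⟩ : X) = y) (a : C(Y, A)) :
    (cutoffPullback hU h hh ρ a).restrict Y = a := by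
  ext1 y
  rw [ContinuousMap.restrict_apply, cutoffPullback_apply_of_mem _ _ _ _ (hYU y.2), hh1 _ y.2,
    one_smul, Subtype.ext (hρ _ y.2)]

theorem posSemidef_cutoffPullback {X Y n : Type*} [TopologicalSpace X] [TopologicalSpace Y]
    [CompactSpace Y] [Fintype n] [DecidableEq n] {U : Set X} (hU : IsOpen U) {h : C(X, ℝ)}
    (hh : ∀ x ∉ U, h x = 0) (hh_nonneg : ∀ x, 0 ≤ h x) (ρ : C(U, Y))
    {a : C(Y, Matrix n n ℂ)} (ha : ∀ y, (a y).PosSemidef) (x : X) :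
    (cutoffPullback hU h hh ρ a x).PosSemidef := by
  by_cases hx : x ∈ U
  · rw [cutoffPullback_apply_of_mem _ _ _ _ hx]
    exact (ha _).smul (hh_nonneg x)
  · rw [cutoffPullback_apply_of_notMem _ _ _ _ hx]
    exact .zero

section Cuntz

variable {X Y A : Type*} [TopologicalSpace X] [CompactSpace X] [TopologicalSpace Y]
  [CompactSpace Y] [NormedRing A] [NormedAlgebra ℝ A] [StarRing A] [ContinuousStar A]
  [StarModule ℝ A] {U : Set X} (hU : IsOpen U) (ρ : C(U, Y))

theorem norm_star_cutoffPullback_mul_sub_le {f g : C(X, ℝ)} (hf0 : ∀ x ∉ U, f x = 0)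
    (hg0 : ∀ x ∉ U, g x = 0) (hgf : ∀ x, |g x ^ 2 * f x| ≤ 1) {ε : ℝ} (hε : 0 ≤ ε)
    (hgfε : ∀ x, |(g x ^ 2 - 1) * f x| ≤ ε) (x a b : C(Y, A)) :
    ‖star (cutoffPullback hU g hg0 ρ x) * cutoffPullback hU f hf0 ρ b *
        cutoffPullback hU g hg0 ρ x - cutoffPullback hU f hf0 ρ a‖ ≤
      ‖star x * b * x - a‖ + ε * ‖a‖ := by
  refine (ContinuousMap.norm_le _ (by positivity)).2 fun z => ?_
  by_cases hz : z ∈ U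
  · set y := ρ ⟨z, hz⟩
    have hval : (star (cutoffPullback hU g hg0 ρ x) * cutoffPullback hU f hf0 ρ b *
        cutoffPullback hU g hg0 ρ x - cutoffPullback hU f hf0 ρ a) z =
        (g z ^ 2 * f z) • (star x * b * x - a) y + ((g z ^ 2 - 1) * f z) • a y := by
      simp only [ContinuousMap.sub_apply, ContinuousMap.mul_apply, ContinuousMap.star_apply,
        cutoffPullback_apply_of_mem _ _ _ _ hz]
      exact star_smul_mul_smul_mul_smul_sub_smul _ _ _ _ _
    calc _ ≤ |g z ^ 2 * f z| * ‖(star x * b * x - a) y‖ + |(g z ^ 2 - 1) * f z| * ‖a y‖ := by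
          rw [hval, ← Real.norm_eq_abs, ← Real.norm_eq_abs, ← norm_smul, ← norm_smul]
          exact norm_add_le _ _
      _ ≤ 1 * ‖star x * b * x - a‖ + ε * ‖a‖ := by
          gcongr
          exacts [hgf z, ContinuousMap.norm_coe_le_norm _ _, hgfε z,
            ContinuousMap.norm_coe_le_norm _ _]
      _ = ‖star x * b * x - a‖ + ε * ‖a‖ := by rw [one_mul]
  · simp only [ContinuousMap.sub_apply, ContinuousMap.mul_apply,
      cutoffPullback_apply_of_notMem _ _ _ _ hz, mul_zero, sub_zero, norm_zero]
    positivity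

theorem CuntzLE.cutoffPullback {f : C(X, ℝ)} (hf0 : ∀ x ∉ U, f x = 0)
    (hf01 : ∀ x, f x ∈ Set.Icc (0 : ℝ) 1) {a b : C(Y, A)} (hab : CuntzLE a b) :
    CuntzLE (cutoffPullback hU f hf0 ρ a) (cutoffPullback hU f hf0 ρ b) := by
  obtain ⟨x, hx⟩ := hab
  set g : ℕ → C(X, ℝ) := fun k => 1 ⊓ ((k + 1 : ℝ) • f)
  have hg : ∀ k z, g k z = min 1 ((k + 1) * f z) := fun k z => rfl
  have hg0 : ∀ k, ∀ z ∉ U, g k z = 0 := fun k z hz => by simp [hg, hf0 z hz]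
  have hgf : ∀ k z, |g k z ^ 2 * f z| ≤ 1 := fun k z => by
    obtain ⟨hfz0, hfz1⟩ := hf01 z
    have hgz0 : 0 ≤ g k z := le_min zero_le_one (mul_nonneg (by positivity) hfz0)
    rw [abs_of_nonneg (mul_nonneg (sq_nonneg _) hfz0)]
    exact mul_le_one₀ (pow_le_one₀ hgz0 (min_le_left _ _)) hfz0 hfz1
  refine ⟨fun k => _root_.cutoffPullback hU (g k) (hg0 k) ρ (x k),
    squeeze_zero (fun _ => norm_nonneg _) (fun k => norm_star_cutoffPullback_mul_sub_le hU ρ hf0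
      (hg0 k) (hgf k) (by positivity)
      (fun z => abs_min_one_mul_sq_sub_one_mul_le (by positivity) (hf01 z).1) (x k) a b) ?_⟩
  simpa using hx.add ((tendsto_one_div_add_atTop_nhds_zero_nat (𝕜 := ℝ)).mul_const ‖a‖)

end Cuntz

theorem stmt13_general {X : Type*} [TopologicalSpace X] [CompactSpace X]
    (U Y : Set X) (hU : IsOpen U) (hY : IsClosed Y) (hYU : Y ⊆ U)
    (ρ : C(U, Y)) (hρ : ∀ (y : X) (hy : y ∈ Y), (ρ ⟨y, hYU hy⟩ : X) = y)
    (f : C(X, ℝ)) (hf01 : ∀ x, f x ∈ Set.Icc (0 : ℝ) 1)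
    (hf1 : ∀ y ∈ Y, f y = 1) (hf0 : ∀ x ∉ U, f x = 0)
    (m : ℕ) (p q : C(Y, Matrix (Fin m) (Fin m) ℂ))
    (hp : ∀ y, (p y).PosSemidef) (hq : ∀ y, (q y).PosSemidef)
    (P Q : C(X, Matrix (Fin m) (Fin m) ℂ))
    (hPU : ∀ (x : X) (hx : x ∈ U), P x = f x • p (ρ ⟨x, hx⟩))
    (hP0 : ∀ x ∉ U, P x = 0)
    (hQU : ∀ (x : X) (hx : x ∈ U), Q x = f x • q (ρ ⟨x, hx⟩))
    (hQ0 : ∀ x ∉ U, Q x = 0) :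
    haveI : CompactSpace Y := isCompact_iff_compactSpace.mp hY.isCompact
    (∀ x, (P x).PosSemidef) ∧ (∀ x, (Q x).PosSemidef) ∧
      (CuntzLE P Q ↔ CuntzLE p q) := by
  have : CompactSpace Y := isCompact_iff_compactSpace.mp hY.isCompact
  obtain rfl := eq_cutoffPullback hU hf0 ρ p hPU hP0
  obtain rfl := eq_cutoffPullback hU hf0 ρ q hQU hQ0
  refine ⟨posSemidef_cutoffPullback hU hf0 (fun x => (hf01 x).1) ρ hp,
    posSemidef_cutoffPullback hU hf0 (fun x => (hf01 x).1) ρ hq,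
    fun hPQ => ?_, CuntzLE.cutoffPullback hU ρ hf0 hf01⟩
  have hpq := hPQ.restrict Y
  rwa [cutoffPullback_restrict hU hf0 hf1 hYU hρ, cutoffPullback_restrict hU hf0 hf1 hYU hρ] at hpq

/-- pulling back positive matrix-valued functions on a closed set `Y`
via a retraction `ρ : U → Y` and cutting down by a function `f` vanishing off `U` and
equal to `1` on `Y` yields positive elements `P, Q` with `P ≾ Q` iff `p ≾ q`. -/
theorem stmt13 {X : Type*} [TopologicalSpace X] [CompactSpace X] [T2Space X]
    (U Y : Set X) (hU : IsOpen U) (hY : IsClosed Y) (hYU : Y ⊆ U)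
    (ρ : C(U, Y)) (hρ : ∀ (y : X) (hy : y ∈ Y), (ρ ⟨y, hYU hy⟩ : X) = y)
    (f : C(X, ℝ)) (hf01 : ∀ x, f x ∈ Set.Icc (0 : ℝ) 1)
    (hf1 : ∀ y ∈ Y, f y = 1) (hf0 : ∀ x ∉ U, f x = 0)
    (m : ℕ) (p q : C(Y, Matrix (Fin m) (Fin m) ℂ))
    (hp : ∀ y, (p y).PosSemidef) (hq : ∀ y, (q y).PosSemidef)
    (P Q : C(X, Matrix (Fin m) (Fin m) ℂ))
    (hPU : ∀ (x : X) (hx : x ∈ U), P x = f x • p (ρ ⟨x, hx⟩))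
    (hP0 : ∀ x ∉ U, P x = 0)
    (hQU : ∀ (x : X) (hx : x ∈ U), Q x = f x • q (ρ ⟨x, hx⟩))
    (hQ0 : ∀ x ∉ U, Q x = 0) :
    haveI : CompactSpace Y := isCompact_iff_compactSpace.mp hY.isCompact
    (∀ x, (P x).PosSemidef) ∧ (∀ x, (Q x).PosSemidef) ∧
      (CuntzLE P Q ↔ CuntzLE p q) :=
  stmt13_general U Y hU hY hYU ρ hρ f hf01 hf1 hf0 m p q hp hq P Q hPU hP0 hQU hQ0
end

section
/- Let n_1, …, n_k be natural numbers, let Y = S^{n_1} × ⋯ × S^{n_k} be the product of the unit spheres S^{n_i} ⊆ ℝ^{n_i + 1}, and set N = k + (n_1 + ⋯ + n_k). Then for every m ∈ ℕ there exists a map ι from the set of projections of C(Y, M_m(ℂ)) to the set of positive elements of C([0,1]^N, M_m(ℂ)) such that for all projections p, q ∈ C(Y, M_m(ℂ)): ι(p) ≾ ι(q) in C([0,1]^N, M_m(ℂ)) if and only if p ≾ q in C(Y, M_m(ℂ)). In particular ι induces an order embedding of the Murray–von Neumann comparison classes of projections over Y into the Cuntz classes of positive elements over [0,1]^N. -/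
open scoped Matrix.Norms.L2Operator ComplexOrder

/-!
Write `Y = S^{n_1} × ⋯ × S^{n_k}`. The affine change of coordinates `t ↦ 2t - 1` turns `[0,1]^N`
into the box of points `u = (u₁, …, u_k)` with `uᵢ ∈ [-1,1]^{n_i+1}`, and this box contains `Y`.
The radial projection `ρ(u) = (uᵢ / ‖uᵢ‖)ᵢ` retracts the box onto `Y` wherever no `uᵢ` vanishes,
and the weight `f(u) = ∏ᵢ min(1, ‖uᵢ‖)` vanishes where `ρ` is undefined and equals `1` on `Y`.
So `ι p = f • (p ∘ ρ)` is continuous and positive, and it restricts to `p` on `Y`; restricting a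
witness of `ι p ≾ ι q` to `Y` gives `p ≾ q`. Conversely, if `x_k⋆ q x_k → p`, the damped maps
`min(1, f/δ_k) • (x_k ∘ ρ)` witness `ι p ≾ ι q`: where `f ≥ δ_k` they agree with `x_k ∘ ρ`, and
elsewhere both sides are `O(δ_k)`.
-/

open Filter Topology

theorem abs_min_one_div_sq_mul_sub_le {s δ : ℝ} (hs : 0 ≤ s) (hδ : 0 < δ) :
    |min 1 (s / δ) ^ 2 * s - s| ≤ δ := by
  rw [abs_sub_comm]
  rcases le_or_gt δ s with hδs | hsδ
  · rw [min_eq_left ((one_le_div hδ).mpr hδs)]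
    simpa using hδ.le
  · have h0 : 0 ≤ min 1 (s / δ) := le_min zero_le_one (div_nonneg hs hδ.le)
    have hsq : min 1 (s / δ) ^ 2 ≤ 1 := pow_le_one₀ h0 (min_le_left _ _)
    have hsq0 : 0 ≤ min 1 (s / δ) ^ 2 * s := by positivity
    rw [abs_of_nonneg (by nlinarith)]
    linarith

section WeightedComp

variable {T Y A : Type*} [TopologicalSpace T] [TopologicalSpace Y] [CompactSpace Y]

section Normed

variable [NormedAddCommGroup A] [NormedSpace ℂ A]

theorem continuous_ofReal_smul_comp {w : T → ℝ} (hw : Continuous w) {ρ : T → Y}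
    (hρ : ∀ t, w t ≠ 0 → ContinuousAt ρ t) (g : C(Y, A)) :
    Continuous fun t => (w t : ℂ) • g (ρ t) := by
  refine continuous_iff_continuousAt.mpr fun t₀ => ?_
  by_cases h : w t₀ = 0
  · have hnorm : Tendsto (fun t => |w t| * ‖g‖) (𝓝 t₀) (𝓝 0) := by
      simpa [h] using (hw.abs.tendsto t₀).mul_const ‖g‖
    rw [ContinuousAt, h, Complex.ofReal_zero, zero_smul]
    refine squeeze_zero_norm (fun t => ?_) hnorm
    rw [norm_smul, Complex.norm_real, Real.norm_eq_abs]
    exact mul_le_mul_of_nonneg_left (g.norm_coe_le_norm _) (abs_nonneg _)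
  · exact (Complex.continuous_ofReal.comp hw).continuousAt.smul
      (g.continuous.continuousAt.comp (hρ t₀ h))

def ContinuousMap.weightedComp (w : C(T, ℝ)) (ρ : T → Y)
    (hρ : ∀ t, w t ≠ 0 → ContinuousAt ρ t) (g : C(Y, A)) : C(T, A) :=
  ⟨fun t => (w t : ℂ) • g (ρ t), continuous_ofReal_smul_comp w.continuous hρ g⟩

theorem ContinuousMap.weightedComp_apply (w : C(T, ℝ)) (ρ : T → Y)
    (hρ : ∀ t, w t ≠ 0 → ContinuousAt ρ t) (g : C(Y, A)) (t : T) :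
    w.weightedComp ρ hρ g t = (w t : ℂ) • g (ρ t) := rfl

theorem ContinuousMap.weightedComp_comp {f : C(T, ℝ)} {ρ : T → Y}
    (hρ : ∀ t, f t ≠ 0 → ContinuousAt ρ t) (g : C(Y, A)) {e : C(Y, T)}
    (hfe : ∀ y, f (e y) = 1) (hρe : ∀ y, ρ (e y) = y) :
    (f.weightedComp ρ hρ g).comp e = g := by
  ext y
  simp [weightedComp_apply, hfe, hρe]

end Normed

theorem CuntzLE.comp [CompactSpace T] [NormedRing A] [StarRing A] [ContinuousStar A]
    {a b : C(T, A)} (h : CuntzLE a b) (e : C(Y, T)) : CuntzLE (a.comp e) (b.comp e) := by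
  obtain ⟨x, hx⟩ := h
  refine ⟨fun k => (x k).comp e, squeeze_zero (fun _ => norm_nonneg _) (fun k => ?_) hx⟩
  exact (ContinuousMap.norm_le _ (norm_nonneg _)).mpr fun y =>
    (star (x k) * b * x k - a).norm_coe_le_norm (e y)

variable [CompactSpace T] [NormedRing A] [StarRing A] [ContinuousStar A] [NormedAlgebra ℂ A]
  [StarModule ℂ A]

theorem norm_star_weightedComp_mul_weightedComp_sub_le {f w : C(T, ℝ)} {ρ : T → Y}
    (hρf : ∀ t, f t ≠ 0 → ContinuousAt ρ t) (hρw : ∀ t, w t ≠ 0 → ContinuousAt ρ t)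
    (x p q : C(Y, A)) {δ : ℝ} (hδ : 0 ≤ δ) (hw0 : ∀ t, 0 ≤ w t) (hw1 : ∀ t, w t ≤ 1)
    (hwf : ∀ t, |w t ^ 2 * f t - f t| ≤ δ) :
    ‖star (w.weightedComp ρ hρw x) * f.weightedComp ρ hρf q * w.weightedComp ρ hρw x -
        f.weightedComp ρ hρf p‖ ≤ ‖f‖ * ‖star x * q * x - p‖ + δ * ‖p‖ := by
  refine (ContinuousMap.norm_le _ (by positivity)).mpr fun t => ?_
  set c := w t ^ 2 * f t
  have hc : |c| ≤ ‖f‖ := calc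
    |c| ≤ |f t| := by
      rw [abs_mul, abs_of_nonneg (pow_nonneg (hw0 t) 2)]
      exact mul_le_of_le_one_left (abs_nonneg _) (pow_le_one₀ (hw0 t) (hw1 t))
    _ ≤ ‖f‖ := f.norm_coe_le_norm t
  have hpt : (star (w.weightedComp ρ hρw x) * f.weightedComp ρ hρf q * w.weightedComp ρ hρw x -
      f.weightedComp ρ hρf p) t =
      (c : ℂ) • (star x * q * x - p) (ρ t) + ((c - f t : ℝ) : ℂ) • p (ρ t) := by
    simp only [ContinuousMap.sub_apply, ContinuousMap.mul_apply, ContinuousMap.star_apply,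
      ContinuousMap.weightedComp_apply, star_smul, Complex.star_def, Complex.conj_ofReal,
      smul_mul_assoc, mul_smul_comm, smul_smul, smul_sub]
    rw [show (w t : ℂ) * ((f t : ℂ) * (w t : ℂ)) = c by push_cast [c]; ring,
      Complex.ofReal_sub, sub_smul]
    abel
  rw [hpt]
  calc _ ≤ |c| * ‖(star x * q * x - p) (ρ t)‖ + |c - f t| * ‖p (ρ t)‖ := by
        refine (norm_add_le _ _).trans_eq ?_
        simp only [norm_smul, Complex.norm_real, Real.norm_eq_abs]
    _ ≤ ‖f‖ * ‖star x * q * x - p‖ + δ * ‖p‖ := by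
        gcongr
        · exact ContinuousMap.norm_coe_le_norm _ _
        · exact hwf t
        · exact ContinuousMap.norm_coe_le_norm _ _

theorem CuntzLE.weightedComp {f : C(T, ℝ)} (hf : ∀ t, 0 ≤ f t) {ρ : T → Y}
    (hρ : ∀ t, f t ≠ 0 → ContinuousAt ρ t) {p q : C(Y, A)} (h : CuntzLE p q) :
    CuntzLE (f.weightedComp ρ hρ p) (f.weightedComp ρ hρ q) := by
  obtain ⟨x, hx⟩ := h
  set δ : ℕ → ℝ := fun k => 1 / ((k : ℝ) + 1)
  have hδ : ∀ k, 0 < δ k := fun k => by positivity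
  let w : ℕ → C(T, ℝ) := fun k => ⟨fun t => min 1 (f t / δ k), by fun_prop⟩
  have hw : ∀ k t, w k t ≠ 0 → ContinuousAt ρ t := fun k t hwt =>
    hρ t fun hft => hwt (by simp [w, hft])
  refine ⟨fun k => (w k).weightedComp ρ (hw k) (x k),
    squeeze_zero (g := fun k => ‖f‖ * ‖star (x k) * q * x k - p‖ + δ k * ‖p‖)
      (fun _ => norm_nonneg _) (fun k => ?_) ?_⟩
  · refine norm_star_weightedComp_mul_weightedComp_sub_le hρ (hw k) (x k) p q (hδ k).le
      (fun t => le_min zero_le_one (div_nonneg (hf t) (hδ k).le)) (fun t => min_le_left _ _)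
      fun t => abs_min_one_div_sq_mul_sub_le (hf t) (hδ k)
  · simpa [δ] using (hx.const_mul ‖f‖).add
      (tendsto_one_div_add_atTop_nhds_zero_nat.mul_const ‖p‖)

theorem cuntzLE_weightedComp_iff {f : C(T, ℝ)} (hf : ∀ t, 0 ≤ f t)
    {ρ : T → Y} (hρ : ∀ t, f t ≠ 0 → ContinuousAt ρ t) (e : C(Y, T))
    (hfe : ∀ y, f (e y) = 1) (hρe : ∀ y, ρ (e y) = y) {p q : C(Y, A)} :
    CuntzLE (f.weightedComp ρ hρ p) (f.weightedComp ρ hρ q) ↔ CuntzLE p q := by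
  refine ⟨fun h => ?_, CuntzLE.weightedComp hf hρ⟩
  simpa only [ContinuousMap.weightedComp_comp hρ _ hfe hρe] using h.comp e

end WeightedComp

section PosSemidef

variable {X : Type*} [TopologicalSpace X] {n : Type*} [Fintype n]

open scoped MatrixOrder in
theorem ContinuousMap.posSemidef_apply_of_isStarProjection {p : C(X, Matrix n n ℂ)}
    (hp : IsStarProjection p) (x : X) : (p x).PosSemidef :=
  have hpx : IsStarProjection (p x) :=
    ⟨congr($(hp.isIdempotentElem) x), congr($(hp.isSelfAdjoint) x)⟩
  Matrix.nonneg_iff_posSemidef.mp hpx.nonneg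

theorem ContinuousMap.posSemidef_weightedComp_apply [DecidableEq n] {T : Type*}
    [TopologicalSpace T] [CompactSpace X] {f : C(T, ℝ)} (hf : ∀ t, 0 ≤ f t) {ρ : T → X}
    (hρ : ∀ t, f t ≠ 0 → ContinuousAt ρ t) {g : C(X, Matrix n n ℂ)}
    (hg : ∀ x, (g x).PosSemidef) (t : T) : (f.weightedComp ρ hρ g t).PosSemidef :=
  (hg (ρ t)).smul (Complex.zero_le_real.mpr (hf t))

end PosSemidef

section RadialProjection

variable {E : Type*} [NormedAddCommGroup E] [NormedSpace ℝ E]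

open scoped Classical in
noncomputable def radialProjection (b : Metric.sphere (0 : E) 1) (v : E) :
    Metric.sphere (0 : E) 1 :=
  if hv : v = 0 then b else ⟨‖v‖⁻¹ • v, by simp [norm_smul, hv]⟩

theorem radialProjection_of_ne_zero (b : Metric.sphere (0 : E) 1) {v : E} (hv : v ≠ 0) :
    (radialProjection b v : E) = ‖v‖⁻¹ • v := by
  simp [radialProjection, hv]

theorem radialProjection_coe (b : Metric.sphere (0 : E) 1) (y : Metric.sphere (0 : E) 1) :
    radialProjection b y = y := by
  have hy : (y : E) ≠ 0 := ne_zero_of_mem_unit_sphere y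
  ext1
  simp [radialProjection_of_ne_zero b hy]

theorem continuousAt_radialProjection (b : Metric.sphere (0 : E) 1) {v : E} (hv : v ≠ 0) :
    ContinuousAt (radialProjection b) v := by
  rw [Topology.IsInducing.subtypeVal.continuousAt_iff]
  have heq : (fun w => (radialProjection b w : E)) =ᶠ[𝓝 v] fun w => ‖w‖⁻¹ • w := by
    filter_upwards [isOpen_ne.mem_nhds hv] with w hw using radialProjection_of_ne_zero b hw
  exact ContinuousAt.congr ((continuous_norm.continuousAt.inv₀ (norm_ne_zero_iff.mpr hv)).smul
    continuousAt_id) heq.symm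

end RadialProjection

namespace SphereProduct

variable {k : ℕ} (n : Fin k → ℕ)

abbrev Space := (i : Fin k) → Metric.sphere (0 : EuclideanSpace ℝ (Fin (n i + 1))) 1
abbrev Cube := Fin (k + ∑ i, n i) → Set.Icc (0 : ℝ) 1

noncomputable def coordEquiv : (Σ i : Fin k, Fin (n i + 1)) ≃ Fin (k + ∑ i, n i) :=
  Fintype.equivFinOfCardEq (by simp [Finset.sum_add_distrib, add_comm])

noncomputable def toBox (t : Cube n) (i : Fin k) : EuclideanSpace ℝ (Fin (n i + 1)) :=
  WithLp.toLp 2 fun j => 2 * (t (coordEquiv n ⟨i, j⟩) : ℝ) - 1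

@[fun_prop]
theorem continuous_toBox (i : Fin k) : Continuous fun t : Cube n => toBox n t i := by
  unfold toBox
  fun_prop

variable {n}

def coord (y : Space n) (ij : Σ i : Fin k, Fin (n i + 1)) : ℝ :=
  (y ij.1 : EuclideanSpace ℝ (Fin (n ij.1 + 1))) ij.2

theorem abs_coord_le_one (y : Space n) (ij : Σ i : Fin k, Fin (n i + 1)) : |coord y ij| ≤ 1 :=
  (PiLp.norm_apply_le _ ij.2).trans_eq (norm_eq_of_mem_sphere (y ij.1))

@[fun_prop]
theorem continuous_coord (ij : Σ i : Fin k, Fin (n i + 1)) :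
    Continuous fun y : Space n => coord y ij := by
  unfold coord
  fun_prop

variable (n)

noncomputable def toCube : C(Space n, Cube n) where
  toFun y a := ⟨(coord y ((coordEquiv n).symm a) + 1) / 2, by
    have h := abs_le.mp (abs_coord_le_one y ((coordEquiv n).symm a))
    constructor <;> linarith [h.1, h.2]⟩
  continuous_toFun := by fun_prop

theorem toBox_toCube (y : Space n) (i : Fin k) : toBox n (toCube n y) i = y i := by
  ext j
  change 2 * ((coord y ((coordEquiv n).symm (coordEquiv n ⟨i, j⟩)) + 1) / 2) - 1 =
    coord y ⟨i, j⟩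
  rw [Equiv.symm_apply_apply]
  ring

noncomputable def weight : C(Cube n, ℝ) :=
  ⟨fun t => ∏ i, min 1 ‖toBox n t i‖, by fun_prop⟩

theorem weight_apply (t : Cube n) : weight n t = ∏ i, min 1 ‖toBox n t i‖ := rfl

theorem weight_nonneg (t : Cube n) : 0 ≤ weight n t :=
  (weight_apply n t).symm ▸ Finset.prod_nonneg fun _ _ => le_min zero_le_one (norm_nonneg _)

theorem weight_toCube (y : Space n) : weight n (toCube n y) = 1 := by
  simp [weight_apply, toBox_toCube, norm_eq_of_mem_sphere]

noncomputable def retraction (t : Cube n) : Space n := fun i =>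
  radialProjection ⟨EuclideanSpace.single 0 1, by simp⟩ (toBox n t i)

theorem retraction_toCube (y : Space n) : retraction n (toCube n y) = y := by
  funext i
  simp only [retraction, toBox_toCube, radialProjection_coe]

theorem continuousAt_retraction (t : Cube n) (ht : weight n t ≠ 0) :
    ContinuousAt (retraction n) t := by
  refine continuousAt_pi.mpr fun i => (continuousAt_radialProjection _ ?_).comp
    (continuous_toBox n i).continuousAt
  have hi := Finset.prod_ne_zero_iff.mp ((weight_apply n t).symm ▸ ht) i (Finset.mem_univ i)
  exact norm_ne_zero_iff.mp fun h0 => hi (by simp [h0])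

end SphereProduct

/-- for `Y = S^{n_1} × ⋯ × S^{n_k}` and `N = k + (n_1 + ⋯ + n_k)`, the
projections of `C(Y, Mₘ(ℂ))` embed into the positive elements of `C([0,1]^N, Mₘ(ℂ))`
in a way which preserves and reflects Cuntz subequivalence (hence induces an order
embedding of the projection classes over `Y` into the Cuntz classes over `[0,1]^N`). -/
theorem stmt14 (k : ℕ) (n : Fin k → ℕ) (m : ℕ) :
    ∃ ι : {p : C((i : Fin k) → Metric.sphere (0 : EuclideanSpace ℝ (Fin (n i + 1))) 1,
              Matrix (Fin m) (Fin m) ℂ) // IsSelfAdjoint p ∧ IsIdempotentElem p} →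
          {a : C(Fin (k + ∑ i, n i) → Set.Icc (0 : ℝ) 1,
              Matrix (Fin m) (Fin m) ℂ) // ∀ x, (a x).PosSemidef},
      ∀ p q, CuntzLE (ι p).1 (ι q).1 ↔ CuntzLE p.1 q.1 := by
  open SphereProduct in
  refine ⟨fun p => ⟨(weight n).weightedComp (retraction n) (continuousAt_retraction n) p.1,
    ContinuousMap.posSemidef_weightedComp_apply (weight_nonneg n) _ fun y => ?_⟩, fun p q => ?_⟩
  · exact ContinuousMap.posSemidef_apply_of_isStarProjection ⟨p.2.2, p.2.1⟩ y
  · exact cuntzLE_weightedComp_iff (weight_nonneg n) (continuousAt_retraction n) (toCube n)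
      (weight_toCube n) (retraction_toCube n)
end
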